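/- arXiv:2406.12145 — 6 statements merged into one kernel-verified Lean document; each statement's English description precedes it below -/
import Mathlib

section
/- Let f : ℝ → ℝ be increasing and right-continuous, and g : ℝ → ℝ be increasing. Then the pseudo-inverse of the composition satisfies (f ∘ g)⁻ = g⁻ ∘ f⁻. -/
/-- The pseudo-inverse of `f : ℝ → ℝ`, defined by `f⁻(y) = inf {x : ℝ | f x ≥ y}`,
with the conventions `inf ∅ = ∞` and `inf ℝ = -∞`. -/
noncomputable def pseudoInv (f : ℝ → ℝ) (y : EReal) : EReal :=
  sInf ((fun x : ℝ => (x : EReal)) '' {x : ℝ | y ≤ (f x : EReal)})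

lemma pseudoInv_le_iff (f : ℝ → ℝ) (hf : Monotone f)
    (hrc : ∀ x, ContinuousWithinAt f (Set.Ici x) x) (y : EReal) (t : ℝ) :
    pseudoInv f y ≤ (t : EReal) ↔ y ≤ (f t : EReal) := by
  constructor
  · intro h
    have hgt : ∀ x : ℝ, t < x → y ≤ (f x : EReal) := by
      intro x hx
      have h2 : pseudoInv f y < (x : EReal) :=
        lt_of_le_of_lt h (by exact_mod_cast hx)
      rw [pseudoInv, sInf_lt_iff] at h2
      obtain ⟨a, ⟨s, hs, rfl⟩, hax⟩ := h2
      have hax' : (s : EReal) < (x : EReal) := hax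
      have hsx : s ≤ x := le_of_lt (by exact_mod_cast hax')
      exact le_trans hs (by exact_mod_cast hf hsx)
    induction y using EReal.rec with
    | bot => exact bot_le
    | coe r =>
        have h3 : ∀ x ∈ Set.Ioi t, r ≤ f x := fun x hx => by
          exact_mod_cast hgt x hx
        have hlim : Filter.Tendsto f (nhdsWithin t (Set.Ioi t)) (nhds (f t)) :=
          (hrc t).mono_left (nhdsWithin_mono t Set.Ioi_subset_Ici_self)
        have : r ≤ f t :=
          ge_of_tendsto hlim (eventually_nhdsWithin_of_forall h3)
        exact_mod_cast this
    | top =>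
        exfalso
        have := hgt (t + 1) (by linarith)
        simp at this
  · intro h
    exact sInf_le ⟨t, h, rfl⟩

/-- For `f` increasing and right-continuous and `g` increasing, `(f ∘ g)⁻ = g⁻ ∘ f⁻`. -/
theorem pseudoInv_comp (f g : ℝ → ℝ) (hf : Monotone f)
    (hrc : ∀ x, ContinuousWithinAt f (Set.Ici x) x) (hg : Monotone g) :
    ∀ y : EReal, pseudoInv (f ∘ g) y = pseudoInv g (pseudoInv f y) := by
  intro y
  unfold pseudoInv
  congr 1
  ext a
  simp only [Set.mem_image, Set.mem_setOf_eq, Function.comp_apply]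
  constructor
  · rintro ⟨x, hx, rfl⟩
    exact ⟨x, (pseudoInv_le_iff f hf hrc y (g x)).2 hx, rfl⟩
  · rintro ⟨x, hx, rfl⟩
    exact ⟨x, (pseudoInv_le_iff f hf hrc y (g x)).1 hx, rfl⟩
end

section
/- Let (f_k)_{k ∈ ℕ} be a pointwise decreasing sequence of increasing right-continuous functions ℝ → ℝ converging pointwise to f. Then sup_{k ∈ ℕ} f_k⁻ = f⁻, where f⁻ denotes the pseudo-inverse. -/
open Filter

/-- For a pointwise decreasing sequence `(f_k)` of increasing right-continuous functions
converging pointwise to `f`, we have `sup_k f_k⁻ = f⁻`. -/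
theorem iSup_pseudoInv_of_tendsto (f : ℕ → ℝ → ℝ) (g : ℝ → ℝ)
    (hmono : ∀ k, Monotone (f k))
    (hrc : ∀ k x, ContinuousWithinAt (f k) (Set.Ici x) x)
    (hdec : ∀ k x, f (k + 1) x ≤ f k x)
    (hlim : ∀ x, Tendsto (fun k => f k x) atTop (nhds (g x))) :
    ∀ y : EReal, ⨆ k, pseudoInv (f k) y = pseudoInv g y := by
  intro y
  have hanti : ∀ ⦃j k : ℕ⦄, j ≤ k → ∀ x, f k x ≤ f j x := by
    intro j k hjk x
    induction k, hjk using Nat.le_induction with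
    | base => exact le_rfl
    | succ n hn ih => exact (hdec n x).trans ih
  have hg_le : ∀ k x, g x ≤ f k x := fun k x =>
    le_of_tendsto (hlim x) (eventually_atTop.2 ⟨k, fun j hj => hanti hj x⟩)
  apply le_antisymm
  · refine iSup_le fun k => sInf_le_sInf ?_
    rintro z ⟨x, hx, rfl⟩
    exact ⟨x, Set.mem_setOf.mpr (le_trans hx (by exact_mod_cast hg_le k x)), rfl⟩
  · refine le_of_forall_gt_imp_ge_of_dense fun c hc => ?_
    induction c using EReal.rec with
    | bot => exact absurd hc (not_lt_bot)
    | top => exact le_top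
    | coe t =>
      have ht : ∀ k, y ≤ ((f k t : ℝ) : EReal) := by
        intro k
        have hk : pseudoInv (f k) y < (t : EReal) :=
          lt_of_le_of_lt (le_iSup (fun k => pseudoInv (f k) y) k) hc
        obtain ⟨z, ⟨x, hx, rfl⟩, hzt⟩ := sInf_lt_iff.mp hk
        have hzt' : (x : EReal) < (t : EReal) := hzt
        have hxt : x ≤ t := le_of_lt (by exact_mod_cast hzt')
        exact hx.trans (by exact_mod_cast hmono k hxt)
      have hgt : y ≤ ((g t : ℝ) : EReal) := by
        have : Tendsto (fun k => ((f k t : ℝ) : EReal)) atTop (nhds ((g t : ℝ) : EReal)) :=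
          (continuous_coe_real_ereal.tendsto _).comp (hlim t)
        exact ge_of_tendsto' this ht
      exact sInf_le ⟨t, hgt, rfl⟩
end

section
/- Let Z ~ N(0, σ²) be a centered Gaussian with variance σ² > 0. Then for all r ≥ 0, sqrt(1 - exp(-r²/(2σ²))) ≤ P(|Z| ≤ r) ≤ sqrt(1 - exp(-2r²/(πσ²))). -/
/-! The square of `P(|Z| ≤ r)` is the mass that the planar centred Gaussian, with density
`(2πv)⁻¹ exp (-|p|² / (2v))`, gives to the square `[-r, r]²`; in polar coordinates its mass on
the disk of radius `R` is `1 - exp (-R² / (2v))`. The square contains the disk of radius `r`,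
which gives the lower bound. Since the density is radially decreasing, among sets of equal area
the centred disk carries the most mass; the square has the area of the disk of radius `2r/√π`,
which gives the upper bound. -/

open MeasureTheory ProbabilityTheory Real Set
open scoped ENNReal NNReal

def planeDisk (R : ℝ) : Set (ℝ × ℝ) := {p | p.1 ^ 2 + p.2 ^ 2 ≤ R ^ 2}

lemma isClosed_planeDisk (R : ℝ) : IsClosed (planeDisk R) :=
  isClosed_le (by fun_prop) continuous_const

lemma planeDisk_subset_Icc_prod {R : ℝ} (hR : 0 ≤ R) :
    planeDisk R ⊆ Icc (-R) R ×ˢ Icc (-R) R := by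
  intro p (hp : p.1 ^ 2 + p.2 ^ 2 ≤ R ^ 2)
  exact ⟨abs_le_of_sq_le_sq' (by nlinarith [sq_nonneg p.2]) hR,
    abs_le_of_sq_le_sq' (by nlinarith [sq_nonneg p.1]) hR⟩

lemma isCompact_planeDisk (R : ℝ) : IsCompact (planeDisk R) := by
  have h : planeDisk R = planeDisk |R| := by simp only [planeDisk, sq_abs]
  rw [h]
  exact (isCompact_Icc.prod isCompact_Icc).of_isClosed_subset (isClosed_planeDisk _)
    (planeDisk_subset_Icc_prod (abs_nonneg R))

lemma polarCoord_symm_fst_sq_add_snd_sq (p : ℝ × ℝ) :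
    (polarCoord.symm p).1 ^ 2 + (polarCoord.symm p).2 ^ 2 = p.1 ^ 2 := by
  simp only [polarCoord_symm_apply]
  linear_combination p.1 ^ 2 * cos_sq_add_sin_sq p.2

lemma integral_planeDisk_comp_sq_add_sq {R : ℝ} (hR : 0 ≤ R) (g : ℝ → ℝ) :
    ∫ p in planeDisk R, g (p.1 ^ 2 + p.2 ^ 2) = 2 * π * ∫ ρ in (0)..R, ρ * g (ρ ^ 2) := by
  have hpolar : EqOn
      (fun p : ℝ × ℝ ↦ p.1 • (planeDisk R).indicator (fun q ↦ g (q.1 ^ 2 + q.2 ^ 2))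
        (polarCoord.symm p))
      (fun p ↦ (Iic R).indicator (fun ρ ↦ ρ * g (ρ ^ 2)) p.1 * (1 : ℝ))
      polarCoord.target := by
    rintro p ⟨hρ : 0 < p.1, -⟩
    have hmem : polarCoord.symm p ∈ planeDisk R ↔ p.1 ∈ Iic R := by
      rw [planeDisk, mem_ofPred_eq, polarCoord_symm_fst_sq_add_snd_sq, mem_Iic,
        sq_le_sq₀ hρ.le hR]
    simp only [smul_eq_mul, mul_one]
    by_cases h : p.1 ≤ R
    · rw [indicator_of_mem (hmem.2 h), indicator_of_mem (show p.1 ∈ Iic R from h),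
        polarCoord_symm_fst_sq_add_snd_sq]
    · rw [indicator_of_notMem (mt hmem.1 h), indicator_of_notMem (show p.1 ∉ Iic R from h),
        mul_zero]
  rw [← integral_indicator (isClosed_planeDisk R).measurableSet,
    ← integral_comp_polarCoord_symm, setIntegral_congr_fun polarCoord.open_target.measurableSet
      hpolar, polarCoord_target, Measure.volume_eq_prod,
    setIntegral_prod_mul (μ := volume) (ν := volume)
      (fun ρ ↦ (Iic R).indicator (fun ρ ↦ ρ * g (ρ ^ 2)) ρ) (fun _ ↦ (1 : ℝ)),
    setIntegral_indicator measurableSet_Iic, Ioi_inter_Iic, ← intervalIntegral.integral_of_le hR,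
    setIntegral_const, Real.volume_real_Ioo_of_le (by linarith [pi_pos])]
  simp only [smul_eq_mul, mul_one]
  ring

lemma integral_mul_exp_neg_sq_div {c : ℝ} (hc : c ≠ 0) (R : ℝ) :
    ∫ ρ in (0)..R, ρ * exp (-ρ ^ 2 / (2 * c)) = c * (1 - exp (-R ^ 2 / (2 * c))) := by
  have hderiv (ρ : ℝ) :
      HasDerivAt (fun ρ ↦ -c * exp (-ρ ^ 2 / (2 * c))) (ρ * exp (-ρ ^ 2 / (2 * c))) ρ := by
    have hexponent : HasDerivAt (fun ρ ↦ -ρ ^ 2 / (2 * c)) (-(2 * ρ) / (2 * c)) ρ := by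
      simpa using (hasDerivAt_pow 2 ρ).neg.div_const (2 * c)
    refine (hexponent.exp.const_mul (-c)).congr_deriv ?_
    field_simp
  rw [intervalIntegral.integral_eq_sub_of_hasDerivAt (fun ρ _ ↦ hderiv ρ)
    (Continuous.intervalIntegrable (by fun_prop) _ _), zero_pow two_ne_zero, neg_zero, zero_div,
    exp_zero]
  ring

lemma volume_planeDisk {R : ℝ} (hR : 0 ≤ R) :
    volume (planeDisk R) = ENNReal.ofReal (π * R ^ 2) := by
  have h := integral_planeDisk_comp_sq_add_sq hR fun _ ↦ (1 : ℝ)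
  simp only [setIntegral_const, smul_eq_mul, mul_one, integral_id] at h
  rw [← ENNReal.ofReal_toReal (isCompact_planeDisk R).measure_ne_top, ← measureReal_def, h]
  ring_nf

lemma setLIntegral_le_setLIntegral_of_measure_eq {α : Type*} [MeasurableSpace α]
    {μ : Measure α} {f : α → ℝ≥0∞} {s t : Set α} {c : ℝ≥0∞} (hs : MeasurableSet s)
    (ht : MeasurableSet t) (hst : μ s = μ t) (hfin : μ (s ∩ t) ≠ ∞)
    (hf_le : ∀ x ∈ s \ t, f x ≤ c) (hle_f : ∀ x ∈ t \ s, c ≤ f x) :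
    ∫⁻ x in s, f x ∂μ ≤ ∫⁻ x in t, f x ∂μ := by
  have hdiff : ∫⁻ x in s \ t, f x ∂μ ≤ ∫⁻ x in t \ s, f x ∂μ :=
    calc ∫⁻ x in s \ t, f x ∂μ ≤ ∫⁻ _ in s \ t, c ∂μ := setLIntegral_mono' (hs.diff ht) hf_le
      _ = ∫⁻ _ in t \ s, c ∂μ := by
        rw [setLIntegral_const, setLIntegral_const,
          measure_sdiff_symm hs.nullMeasurableSet ht.nullMeasurableSet hst hfin]
      _ ≤ ∫⁻ x in t \ s, f x ∂μ := setLIntegral_mono' (ht.diff hs) hle_f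
  rw [← lintegral_inter_add_sdiff f s ht, ← lintegral_inter_add_sdiff f t hs, inter_comm t s]
  gcongr

section Gaussian

variable {v : ℝ≥0}

lemma gaussianPDFReal_mul_gaussianPDFReal (m x y : ℝ) :
    gaussianPDFReal m v x * gaussianPDFReal m v y =
      (2 * π * v)⁻¹ * exp (-((x - m) ^ 2 + (y - m) ^ 2) / (2 * v)) := by
  rw [gaussianPDFReal, gaussianPDFReal, mul_mul_mul_comm, ← exp_add, ← mul_inv,
    mul_self_sqrt (by positivity)]
  ring_nf

lemma gaussianReal_prod_gaussianReal (m : ℝ) (hv : v ≠ 0) :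
    (gaussianReal m v).prod (gaussianReal m v) = volume.withDensity fun p ↦
      ENNReal.ofReal ((2 * π * v)⁻¹ * exp (-((p.1 - m) ^ 2 + (p.2 - m) ^ 2) / (2 * v))) := by
  rw [gaussianReal_of_var_ne_zero m hv,
    prod_withDensity (measurable_gaussianPDF m v) (measurable_gaussianPDF m v),
    ← Measure.volume_eq_prod]
  simp only [gaussianPDF, ← ENNReal.ofReal_mul (gaussianPDFReal_nonneg m v _),
    gaussianPDFReal_mul_gaussianPDFReal]

lemma gaussianReal_prod_planeDisk (hv : v ≠ 0) {R : ℝ} (hR : 0 ≤ R) :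
    (gaussianReal 0 v).prod (gaussianReal 0 v) (planeDisk R) =
      ENNReal.ofReal (1 - exp (-R ^ 2 / (2 * v))) := by
  have hv' : (v : ℝ) ≠ 0 := NNReal.coe_ne_zero.mpr hv
  rw [gaussianReal_prod_gaussianReal 0 hv,
    withDensity_apply _ (isClosed_planeDisk R).measurableSet,
    ← ofReal_integral_eq_lintegral_ofReal
      (ContinuousOn.integrableOn_compact (isCompact_planeDisk R) (by fun_prop))
      (ae_of_all _ fun _ ↦ by positivity)]
  simp only [sub_zero]
  rw [integral_planeDisk_comp_sq_add_sq hR fun t ↦ (2 * π * v)⁻¹ * exp (-t / (2 * v))]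
  simp only [mul_left_comm _ (2 * π * (v : ℝ))⁻¹]
  rw [intervalIntegral.integral_const_mul, integral_mul_exp_neg_sq_div hv' R]
  field_simp

lemma gaussianReal_prod_Icc_prod_le (hv : v ≠ 0) {r : ℝ} (hr : 0 ≤ r) :
    (gaussianReal 0 v).prod (gaussianReal 0 v) (Icc (-r) r ×ˢ Icc (-r) r) ≤
      (gaussianReal 0 v).prod (gaussianReal 0 v) (planeDisk (2 * r / √π)) := by
  set R := 2 * r / √π
  have hS : MeasurableSet (Icc (-r) r ×ˢ Icc (-r) r) := measurableSet_Icc.prod measurableSet_Icc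
  have hD : MeasurableSet (planeDisk R) := (isClosed_planeDisk R).measurableSet
  have hvolS : volume (Icc (-r) r ×ˢ Icc (-r) r) = ENNReal.ofReal ((2 * r) ^ 2) := by
    rw [Measure.volume_eq_prod, Measure.prod_prod, Real.volume_Icc,
      ← ENNReal.ofReal_mul (by linarith)]
    ring_nf
  have hvolD : volume (planeDisk R) = ENNReal.ofReal ((2 * r) ^ 2) := by
    rw [volume_planeDisk (by positivity), div_pow, sq_sqrt pi_pos.le, mul_div_cancel₀ _ pi_ne_zero]
  rw [gaussianReal_prod_gaussianReal 0 hv, withDensity_apply _ hS, withDensity_apply _ hD]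
  refine setLIntegral_le_setLIntegral_of_measure_eq
    (c := ENNReal.ofReal ((2 * π * v)⁻¹ * exp (-R ^ 2 / (2 * v)))) hS hD (hvolS.trans hvolD.symm)
    (ne_top_of_le_ne_top (hvolS ▸ ENNReal.ofReal_ne_top) (measure_mono inter_subset_left)) ?_ ?_
  · rintro p ⟨-, hp⟩
    have hp : R ^ 2 < p.1 ^ 2 + p.2 ^ 2 := not_le.mp hp
    simp only [sub_zero]
    gcongr
  · rintro p ⟨hp, -⟩
    have hp : p.1 ^ 2 + p.2 ^ 2 ≤ R ^ 2 := hp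
    simp only [sub_zero]
    gcongr

end Gaussian

/-- For `Z ~ N(0, σ²)` with `σ² > 0` and all `r ≥ 0`,
`sqrt (1 - exp (-r²/(2σ²))) ≤ P(|Z| ≤ r) ≤ sqrt (1 - exp (-2r²/(πσ²)))`. -/
theorem gaussian_abs_le_bounds (v : NNReal) (hv : v ≠ 0) (r : ℝ) (hr : 0 ≤ r) :
    Real.sqrt (1 - Real.exp (-(r ^ 2) / (2 * (v : ℝ)))) ≤
        (gaussianReal 0 v (Set.Icc (-r) r)).toReal ∧
      (gaussianReal 0 v (Set.Icc (-r) r)).toReal ≤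
        Real.sqrt (1 - Real.exp (-(2 * r ^ 2) / (π * (v : ℝ)))) := by
  set μ := gaussianReal 0 v
  set P := (μ (Icc (-r) r)).toReal
  have hsquare : ENNReal.ofReal (P ^ 2) = μ.prod μ (Icc (-r) r ×ˢ Icc (-r) r) := by
    rw [Measure.prod_prod, ← sq, ENNReal.ofReal_pow ENNReal.toReal_nonneg,
      ENNReal.ofReal_toReal (measure_ne_top μ _)]
  have hlower : ENNReal.ofReal (1 - exp (-(r ^ 2) / (2 * v))) ≤ ENNReal.ofReal (P ^ 2) := by
    rw [hsquare, ← gaussianReal_prod_planeDisk hv hr]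
    exact measure_mono (planeDisk_subset_Icc_prod hr)
  have hupper : ENNReal.ofReal (P ^ 2) ≤ ENNReal.ofReal (1 - exp (-(2 * r ^ 2) / (π * v))) := by
    have hexp : -(2 * r / √π) ^ 2 / (2 * v) = -(2 * r ^ 2) / (π * v) := by
      rw [div_pow, sq_sqrt pi_pos.le]
      field_simp
    rw [hsquare, ← hexp, ← gaussianReal_prod_planeDisk hv (by positivity)]
    exact gaussianReal_prod_Icc_prod_le hv hr
  have hexp_le_one : exp (-(2 * r ^ 2) / (π * v)) ≤ 1 :=
    exp_le_one_iff.2 (div_nonpos_of_nonpos_of_nonneg (neg_nonpos.2 (by positivity)) (by positivity))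
  refine ⟨?_, le_sqrt_of_sq_le ((ENNReal.ofReal_le_ofReal_iff (by linarith)).mp hupper)⟩
  exact (sqrt_le_sqrt ((ENNReal.ofReal_le_ofReal_iff (sq_nonneg P)).mp hlower)).trans_eq
    (sqrt_sq ENNReal.toReal_nonneg)
end

section
/- Fix α, β > 0 and r > 0. Let X ~ Inv-Gamma(α, β), and define x_{α,β}(r) := β(exp(r) - exp(-r))/(2αr). Then for every x ∈ (0, ∞), P(|log(X/x)| ≤ r) ≤ P(|log(X/x_{α,β}(r))| ≤ r); i.e., x_{α,β}(r) maximizes x ↦ P(x·exp(-r) ≤ X ≤ x·exp(r)). -/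
/-!
Substituting `t = exp y` turns the window `|log (t / x)| ≤ r` into `[log x - r, log x + r]` and
the inverse gamma law into the law of `log X`, whose density `h = logInvGammaDensity α β` is
`h y = β^α / Γ(α) · exp (-α y - β e^{-y})`. Moving a window of radius `r` from centre `c`
to centre `m` changes its mass by `∫_{c+r}^{m+r} (h y - h (y - 2r)) dy`. For
`m = log x_{α,β}(r)` one has `h (y - 2r) = exp (2αr (1 - e^{m + r - y})) · h y`, so the integrand
is nonnegative left of `m + r` and nonpositive right of it: the mass only grows when the window
moves towards `m`, from either side.
-/

open MeasureTheory Real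

/-- The inverse gamma measure `Inv-Gamma(α, β)` on `(0, ∞)`, with density
`(β^α / Γ(α)) x^{-α-1} exp (-β/x)` with respect to Lebesgue measure. -/
noncomputable def invGammaMeasure (a b : ℝ) : Measure ℝ :=
  volume.withDensity fun x =>
    ENNReal.ofReal
      (if 0 < x then b ^ a / Real.Gamma a * x ^ (-a - 1) * Real.exp (-b / x) else 0)

open Set

theorem integral_window_sub_window {h : ℝ → ℝ} (hh : Continuous h) (r c m : ℝ) :
    (∫ y in m - r..m + r, h y) - ∫ y in c - r..c + r, h y =
      ∫ y in c + r..m + r, (h y - h (y - 2 * r)) := by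
  have hint : ∀ u v, IntervalIntegrable h volume u v := hh.intervalIntegrable
  have hint' : IntervalIntegrable (fun y => h (y - 2 * r)) volume (c + r) (m + r) :=
    (hh.comp (continuous_sub_right _)).intervalIntegrable _ _
  rw [intervalIntegral.integral_sub (hint _ _) hint', intervalIntegral.integral_comp_sub_right,
    intervalIntegral.integral_interval_sub_interval_comm' (hint _ _) (hint _ _) (hint _ _)]
  ring_nf

theorem integral_window_le_of_shift {h : ℝ → ℝ} (hh : Continuous h) {r m : ℝ}
    (hleft : ∀ y ≤ m + r, h (y - 2 * r) ≤ h y)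
    (hright : ∀ y, m + r ≤ y → h y ≤ h (y - 2 * r)) (c : ℝ) :
    ∫ y in c - r..c + r, h y ≤ ∫ y in m - r..m + r, h y := by
  rw [← sub_nonneg, integral_window_sub_window hh]
  rcases le_total c m with hcm | hmc
  · exact intervalIntegral.integral_nonneg (by linarith)
      fun y hy => sub_nonneg.2 (hleft y hy.2)
  · rw [intervalIntegral.integral_symm, ← intervalIntegral.integral_neg]
    exact intervalIntegral.integral_nonneg (by linarith)
      fun y hy => neg_nonneg.2 (sub_nonpos.2 (hright y hy.1))

noncomputable def logInvGammaDensity (a b y : ℝ) : ℝ :=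
  b ^ a / Gamma a * exp (-(a * y) - b * exp (-y))

theorem continuous_logInvGammaDensity (a b : ℝ) : Continuous (logInvGammaDensity a b) := by
  unfold logInvGammaDensity
  fun_prop

theorem logInvGammaDensity_nonneg {a b : ℝ} (ha : 0 ≤ a) (hb : 0 ≤ b) (y : ℝ) :
    0 ≤ logInvGammaDensity a b y := by
  have := Gamma_nonneg_of_nonneg ha
  unfold logInvGammaDensity
  positivity

theorem exp_mul_invGammaDensity_exp (a b y : ℝ) :
    exp y * (b ^ a / Gamma a * exp y ^ (-a - 1) * exp (-b / exp y)) =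
      logInvGammaDensity a b y := by
  have hdiv : -b / exp y = -(b * exp (-y)) := by rw [exp_neg]; ring
  rw [logInvGammaDensity, ← exp_mul, hdiv]
  calc _ = b ^ a / Gamma a * exp (y + y * (-a - 1) + -(b * exp (-y))) := by
        rw [exp_add, exp_add]; ring
    _ = _ := by ring_nf

theorem setOf_abs_log_div_le_inter_Ioi {x : ℝ} (hx : 0 < x) (r : ℝ) :
    {t | |log (t / x)| ≤ r} ∩ Ioi 0 = exp '' Icc (log x - r) (log x + r) := by
  ext t
  constructor
  · rintro ⟨ht, ht0 : 0 < t⟩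
    refine ⟨log t, ?_, exp_log ht0⟩
    rw [mem_ofPred_eq, log_div ht0.ne' hx.ne', abs_le] at ht
    constructor <;> linarith [ht.1, ht.2]
  · rintro ⟨y, hy, rfl⟩
    refine ⟨?_, exp_pos y⟩
    rw [mem_ofPred_eq, log_div (exp_pos y).ne' hx.ne', log_exp, abs_le]
    constructor <;> linarith [hy.1, hy.2]

theorem invGammaMeasure_setOf_abs_log_div_le {a b : ℝ} (ha : 0 ≤ a) (hb : 0 ≤ b) {x r : ℝ}
    (hx : 0 < x) (hr : 0 ≤ r) :
    invGammaMeasure a b {t | |log (t / x)| ≤ r} =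
      ENNReal.ofReal (∫ y in log x - r..log x + r, logInvGammaDensity a b y) := by
  have hdens : (fun t : ℝ => ENNReal.ofReal
      (if 0 < t then b ^ a / Gamma a * t ^ (-a - 1) * exp (-b / t) else 0)) =
      (Ioi 0).indicator
        fun t => ENNReal.ofReal (b ^ a / Gamma a * t ^ (-a - 1) * exp (-b / t)) := by
    ext t
    by_cases ht : 0 < t <;> simp [ht]
  rw [invGammaMeasure, hdens, withDensity_indicator measurableSet_Ioi, withDensity_apply' _,
    Measure.restrict_restrict' measurableSet_Ioi, setOf_abs_log_div_le_inter_Ioi hx,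
    lintegral_image_eq_lintegral_abs_deriv_mul measurableSet_Icc
      (fun y _ => (hasDerivAt_exp y).hasDerivWithinAt) exp_injective.injOn]
  simp_rw [abs_of_pos (exp_pos _), ← ENNReal.ofReal_mul (exp_pos _).le,
    exp_mul_invGammaDensity_exp]
  rw [← ofReal_integral_eq_lintegral_ofReal, intervalIntegral.integral_of_le (by linarith),
    integral_Icc_eq_integral_Ioc]
  · exact (continuous_logInvGammaDensity a b).integrableOn_Icc
  · exact Filter.Eventually.of_forall (logInvGammaDensity_nonneg ha hb)

theorem invGamma_windowCenter_pos {a b r : ℝ} (ha : 0 < a) (hb : 0 < b) (hr : 0 < r) :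
    0 < b * (exp r - exp (-r)) / (2 * a * r) :=
  div_pos (mul_pos hb (sub_pos.2 (exp_lt_exp.2 (by linarith)))) (by positivity)

theorem logInvGammaDensity_sub_two_mul {a b r : ℝ} (ha : 0 < a) (hb : 0 < b) (hr : 0 < r)
    (y : ℝ) :
    logInvGammaDensity a b (y - 2 * r) =
      exp (2 * a * r * (1 - exp (log (b * (exp r - exp (-r)) / (2 * a * r)) + r - y))) *
        logInvGammaDensity a b y := by
  have h1 : exp (-(y - 2 * r)) = exp r * exp (r - y) := by rw [← exp_add]; ring_nf
  have h2 : exp (-y) = exp (-r) * exp (r - y) := by rw [← exp_add]; ring_nf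
  rw [add_sub_assoc, exp_add, exp_log (invGamma_windowCenter_pos ha hb hr), logInvGammaDensity,
    logInvGammaDensity, mul_left_comm, ← exp_add, h1, h2]
  congr 2
  field_simp
  ring

/-- For `X ~ Inv-Gamma(α, β)` and `r > 0`, the point `x_{α,β}(r) = β (e^r - e^{-r})/(2αr)`
maximizes `x ↦ P(|log (X/x)| ≤ r)` over `x ∈ (0, ∞)`. -/
theorem invGamma_log_window_maximizer (a b : ℝ) (ha : 0 < a) (hb : 0 < b)
    (r : ℝ) (hr : 0 < r) :
    ∀ x : ℝ, 0 < x →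
      invGammaMeasure a b {t | |Real.log (t / x)| ≤ r} ≤
        invGammaMeasure a b
          {t | |Real.log (t / (b * (Real.exp r - Real.exp (-r)) / (2 * a * r)))| ≤ r} := by
  intro x hx
  have h2ar : 0 ≤ 2 * a * r := by positivity
  rw [invGammaMeasure_setOf_abs_log_div_le ha.le hb.le hx hr.le,
    invGammaMeasure_setOf_abs_log_div_le ha.le hb.le (invGamma_windowCenter_pos ha hb hr)
      hr.le]
  refine ENNReal.ofReal_le_ofReal (integral_window_le_of_shift
    (continuous_logInvGammaDensity a b) (fun y hy => ?_) (fun y hy => ?_) (log x)) <;>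
    rw [logInvGammaDensity_sub_two_mul ha hb hr]
  · exact mul_le_of_le_one_left (logInvGammaDensity_nonneg ha.le hb.le y)
      (exp_le_one_iff.2 (mul_nonpos_of_nonneg_of_nonpos h2ar
        (sub_nonpos.2 (one_le_exp (by linarith)))))
  · exact le_mul_of_one_le_left (logInvGammaDensity_nonneg ha.le hb.le _)
      (one_le_exp (mul_nonneg h2ar (sub_nonneg.2 (exp_le_one_iff.2 (by linarith)))))
end

section
/- Fix n ∈ ℕ and k ∈ {1,...,⌊n/2⌋}. Let a, b be real sequences of length n with b ≥ 0 coordinatewise. With φ_k as the trimmed sum defined via clipping to [a*_{1+k}, a*_{n-k}], we have φ_k(a + b) ≥ φ_k(a) + Σ_{i=1}^{n-2k} b*_i, where b* is the non-decreasing rearrangement of b. -/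
/-- The clipping (truncation) function `φ_{α,β}`: clips `x` to the interval `[α, β]`. -/
noncomputable def clip (α β x : ℝ) : ℝ := max α (min x β)

/-- The trimmed sum `φ_k(a) = Σ_i φ_{a*_{1+k}, a*_{n-k}}(a_i)`, where `a*` is the
non-decreasing rearrangement of `a`. -/
noncomputable def trimSum {n : ℕ} (k : ℕ) (hk1 : 1 ≤ k) (hk2 : 2 * k ≤ n)
    (a : Fin n → ℝ) : ℝ :=
  ∑ i : Fin n,
    clip ((a ∘ Tuple.sort a) ⟨k, by omega⟩) ((a ∘ Tuple.sort a) ⟨n - k - 1, by omega⟩) (a i)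

/-!
Put `c = a + b ≥ a`. Order statistics are monotone, so both clipping bounds and every clipped
term grow when passing from `a` to `c`. On the indices `i` with `a*_{1+k} ≤ a i` and
`c i ≤ c*_{n-k}` the lower clip does not touch `a i` and the upper clip does not touch `c i`,
so the term there grows by at least `b i`. At most `k` indices fail each of the two conditions,
so at least `n - 2k` indices satisfy both, and since `b ≥ 0` the sum of `b` over them is at
least the sum of the `n - 2k` smallest entries of `b`.
-/

open Finset

lemma clip_mono {α α' β β' x x' : ℝ} (hα : α ≤ α') (hβ : β ≤ β') (hx : x ≤ x') :
    clip α β x ≤ clip α' β' x' :=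
  max_le_max hα (min_le_min hx hβ)

lemma clip_add_le_clip_add {α α' β β' x y : ℝ} (hx : α ≤ x) (hxy : x + y ≤ β') :
    clip α β x + y ≤ clip α' β' (x + y) := by
  have h₁ : clip α β x ≤ x := max_le hx (min_le_left x β)
  have h₂ : x + y ≤ clip α' β' (x + y) := le_max_of_le_right (le_min le_rfl hxy)
  linarith

lemma card_filter_comp_perm {ι β : Type*} [Fintype ι] (f : ι → β) (σ : Equiv.Perm ι)
    (p : β → Prop) [DecidablePred p] : #{i | p (f (σ i))} = #{i | p (f i)} :=
  card_equiv σ (by simp)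

section OrderStat

variable {α : Type*} [LinearOrder α] {n : ℕ}

/-- The non-decreasing rearrangement `a*` of `a`, indexed from `0`. -/
def orderStat (a : Fin n → α) : Fin n → α := a ∘ Tuple.sort a

lemma monotone_orderStat (a : Fin n → α) : Monotone (orderStat a) :=
  Tuple.monotone_sort a

lemma card_filter_orderStat (a : Fin n → α) (p : α → Prop) [DecidablePred p] :
    #{i | p (orderStat a i)} = #{i | p (a i)} :=
  card_filter_comp_perm a _ p

lemma card_filter_lt_orderStat_le (a : Fin n → α) (j : Fin n) :
    #{i | a i < orderStat a j} ≤ j := by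
  rw [← card_filter_orderStat a (· < orderStat a j)]
  by_contra! h
  exact lt_irrefl _ ((Tuple.lt_card_lt_iff_apply_lt_of_monotone (monotone_orderStat a)).1 h)

lemma card_filter_orderStat_lt_le (a : Fin n → α) (j : Fin n) :
    #{i | orderStat a j < a i} ≤ n - 1 - j := by
  rw [← card_filter_orderStat a (orderStat a j < ·),
    ← card_filter_comp_perm _ Fin.revPerm (orderStat a j < ·)]
  by_contra! h
  have hanti : Antitone (orderStat a ∘ Fin.rev) :=
    (monotone_orderStat a).comp_antitone Fin.rev_anti
  have := (Tuple.lt_card_gt_iff_apply_gt_of_antitone hanti (j := j.rev)).1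
    (by rw [Fin.val_rev]; simpa [Nat.sub_sub, add_comm] using h)
  simp at this

lemma orderStat_mono {a c : Fin n → α} (h : a ≤ c) : orderStat a ≤ orderStat c := by
  intro j
  have hc : (j : ℕ) < #{i | c i ≤ orderStat c j} := by
    rw [← card_filter_orderStat c (· ≤ orderStat c j)]
    exact (Tuple.lt_card_le_iff_apply_le_of_monotone (monotone_orderStat c)).2 le_rfl
  have hca : #{i | c i ≤ orderStat c j} ≤ #{i | a i ≤ orderStat c j} :=
    card_le_card (monotone_filter_right _ fun i _ hi => (h i).trans hi)
  rw [← card_filter_orderStat a (· ≤ orderStat c j)] at hca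
  exact (Tuple.lt_card_le_iff_apply_le_of_monotone (monotone_orderStat a)).1 (hc.trans_le hca)

lemma card_filter_orderStat_le_and_le_orderStat (a c : Fin n → α) (j j' : Fin n) :
    j' + 1 - j ≤ #{i | orderStat a j ≤ a i ∧ c i ≤ orderStat c j'} := by
  have hlow := card_filter_lt_orderStat_le a j
  have hhigh := card_filter_orderStat_lt_le c j'
  set mid : Finset (Fin n) := {i | orderStat a j ≤ a i ∧ c i ≤ orderStat c j'}
  set low : Finset (Fin n) := {i | a i < orderStat a j}
  set high : Finset (Fin n) := {i | orderStat c j' < c i}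
  have hcover : univ ⊆ mid ∪ (low ∪ high) := fun i _ => by
    simp only [mid, low, high, mem_union, mem_filter_univ]; grind
  have hn := card_le_card hcover
  rw [card_univ, Fintype.card_fin] at hn
  have := card_union_le mid (low ∪ high)
  have := card_union_le low high
  omega

end OrderStat

lemma Fin.val_le_orderEmbedding {m n : ℕ} (e : Fin m ↪o Fin n) (t : Fin m) : (t : ℕ) ≤ e t :=
  calc (t : ℕ) = #((Iio t).map e.toEmbedding) := by rw [card_map, Fin.card_Iio]
    _ ≤ #(Iio (e t)) := card_le_card fun x => by
        simp only [mem_map, mem_Iio]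
        rintro ⟨y, hy, rfl⟩
        exact e.lt_iff_lt.2 hy
    _ = e t := Fin.card_Iio _

section Sums

variable {M : Type*} [AddCommMonoid M] [LinearOrder M] [IsOrderedAddMonoid M]

lemma sum_castLE_le_sum_of_monotone {m n : ℕ} {g : Fin n → M} (hg : Monotone g) (hg₀ : 0 ≤ g)
    {T : Finset (Fin n)} (hT : m ≤ #T) (hmn : m ≤ n) :
    ∑ t : Fin m, g (Fin.castLE hmn t) ≤ ∑ j ∈ T, g j := by
  obtain ⟨T', hT'T, hcard⟩ := exists_subset_card_eq hT
  calc ∑ t : Fin m, g (Fin.castLE hmn t)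
      ≤ ∑ t : Fin m, g (T'.orderEmbOfFin hcard t) :=
        sum_le_sum fun t _ => hg (Fin.val_le_orderEmbedding _ t)
    _ = ∑ j ∈ univ.map (T'.orderEmbOfFin hcard).toEmbedding, g j := (sum_map _ _ _).symm
    _ = ∑ j ∈ T', g j := by rw [map_orderEmbOfFin_univ]
    _ ≤ ∑ j ∈ T, g j := sum_le_sum_of_subset_of_nonneg hT'T fun j _ _ => hg₀ j

lemma sum_orderStat_castLE_le_sum {m n : ℕ} {b : Fin n → M} (hb : 0 ≤ b)
    {S : Finset (Fin n)} (hS : m ≤ #S) (hmn : m ≤ n) :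
    ∑ t : Fin m, orderStat b (Fin.castLE hmn t) ≤ ∑ i ∈ S, b i :=
  calc ∑ t : Fin m, orderStat b (Fin.castLE hmn t)
      ≤ ∑ j ∈ S.map (Tuple.sort b).symm.toEmbedding, orderStat b j :=
        sum_castLE_le_sum_of_monotone (monotone_orderStat b) (fun j => hb (Tuple.sort b j))
          (by rwa [card_map]) hmn
    _ = ∑ i ∈ S, b i := by simp [sum_map, orderStat]

lemma sum_add_sum_le_sum {ι : Type*} [Fintype ι] [DecidableEq ι] {f g b : ι → M} (S : Finset ι)
    (hfg : ∀ i, f i ≤ g i) (hS : ∀ i ∈ S, f i + b i ≤ g i) :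
    ∑ i, f i + ∑ i ∈ S, b i ≤ ∑ i, g i := by
  rw [← sum_add_sum_compl S f, ← sum_add_sum_compl S g, add_right_comm, ← sum_add_distrib]
  exact add_le_add (sum_le_sum hS) (sum_le_sum fun i _ => hfg i)

end Sums

lemma sum_attach_range_eq_sum_castLE {M : Type*} [AddCommMonoid M] {m n : ℕ} (hmn : m ≤ n)
    (g : Fin n → M) :
    ∑ i ∈ (range m).attach, g ⟨i.1, (mem_range.1 i.2).trans_le hmn⟩ =
      ∑ t : Fin m, g (Fin.castLE hmn t) :=
  sum_nbij' (fun i => ⟨i.1, mem_range.1 i.2⟩) (fun t => ⟨t, mem_range.2 t.2⟩)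
    (by simp) (by simp) (by simp) (by simp) (by simp)

/-- For `b ≥ 0` coordinatewise,
`φ_k(a + b) ≥ φ_k(a) + Σ_{i=1}^{n-2k} b*_i`, where `b*` is the non-decreasing
rearrangement of `b`. -/
theorem trimSum_add_nonneg_ge {n : ℕ} (k : ℕ) (hk1 : 1 ≤ k) (hk2 : 2 * k ≤ n)
    (a b : Fin n → ℝ) (hb : ∀ i, 0 ≤ b i) :
    trimSum k hk1 hk2 a +
        ∑ i ∈ (Finset.range (n - 2 * k)).attach,
          (b ∘ Tuple.sort b) ⟨i.1, by have := Finset.mem_range.mp i.2; omega⟩ ≤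
      trimSum k hk1 hk2 (fun i => a i + b i) := by
  set c : Fin n → ℝ := fun i => a i + b i
  have hac : a ≤ c := fun i => le_add_of_nonneg_right (hb i)
  set jlo : Fin n := ⟨k, by omega⟩
  set jhi : Fin n := ⟨n - k - 1, by omega⟩
  set S : Finset (Fin n) := {i | orderStat a jlo ≤ a i ∧ c i ≤ orderStat c jhi}
  have hS : n - 2 * k ≤ #S :=
    le_trans (by simp only [jlo, jhi]; omega)
      (card_filter_orderStat_le_and_le_orderStat a c jlo jhi)
  have hm : n - 2 * k ≤ n := by omega
  calc _ = trimSum k hk1 hk2 a + ∑ t : Fin (n - 2 * k), orderStat b (Fin.castLE hm t) :=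
        congrArg _ (sum_attach_range_eq_sum_castLE hm (orderStat b))
    _ ≤ trimSum k hk1 hk2 a + ∑ i ∈ S, b i := by
        gcongr
        exact sum_orderStat_castLE_le_sum hb hS hm
    _ ≤ trimSum k hk1 hk2 c :=
        sum_add_sum_le_sum S
          (fun i => clip_mono (orderStat_mono hac jlo) (orderStat_mono hac jhi) (hac i))
          (fun i hi => clip_add_le_clip_add (mem_filter.1 hi).2.1 (mem_filter.1 hi).2.2)
end

section
/- Let X be a random variable taking values in [0, ∞], let p := P(X = ∞), and suppose lim_{x→∞} x^α (1 - p - F_X(x)) = 0 for some α > 0, where F_X is the CDF restricted to [0,∞). Then for all c > 1, liminf_{δ ↓ 0} Q_X(1 - p - δ/c) / Q_X(1 - p - δ) ≤ c^{1/α}. -/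
open MeasureTheory Filter

/-!
Write `q δ` for the quantile at level `1 - p - δ` and `g δ = δ^(1/α) q δ`. The tail
hypothesis gives `g δ → 0` as `δ ↓ 0`. If the liminf exceeded `c^(1/α)`, then
`q (δ/c) > c^(1/α) q δ`, i.e. `g (δ/c) > g δ > 0`, for all small `δ`; iterating along
`δ/cⁿ → 0` keeps `g` above a positive constant, a contradiction.
-/

open Set Topology

lemma Real.sInf_le_of_mem_of_nonneg {s : Set ℝ} {x : ℝ} (hxs : x ∈ s) (hx : 0 ≤ x) :
    sInf s ≤ x := by
  by_cases hs : BddBelow s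
  · exact csInf_le hs hxs
  · exact (Real.sInf_of_not_bddBelow hs).trans_le hx

section Quantile

variable {F : ℝ → ℝ}

lemma sInf_setOf_le_apply_nonneg (hF : ∀ x ≤ 0, F x = F 0) (t : ℝ) :
    0 ≤ sInf {x | t ≤ F x} := by
  by_cases ht : t ≤ F 0
  · -- the set contains `Iic 0`, so its `sInf` is the junk value `0`
    have hunbdd : ¬BddBelow {x | t ≤ F x} := fun hbdd =>
      not_bddBelow_Iic 0 (hbdd.mono fun x (hx : x ≤ 0) =>
        show t ≤ F x from (hF x hx).symm ▸ ht)
    exact (Real.sInf_of_not_bddBelow hunbdd).ge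
  · refine Real.sInf_nonneg fun x (hx : t ≤ F x) => ?_
    by_contra! hneg
    exact ht (hF x hneg.le ▸ hx)

lemma tendsto_rpow_mul_sInf_setOf_le {L α : ℝ} (hα : 0 < α) (hF : ∀ x ≤ 0, F x = F 0)
    (htail : Tendsto (fun x => x ^ α * (L - F x)) atTop (𝓝 0)) :
    Tendsto (fun δ => δ ^ (1 / α) * sInf {x | L - δ ≤ F x}) (𝓝[>] 0) (𝓝 0) := by
  refine tendsto_order.2 ⟨fun a ha => ?_, fun ε hε => ?_⟩
  · filter_upwards [self_mem_nhdsWithin] with δ (hδ : 0 < δ)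
    exact ha.trans_le (mul_nonneg (Real.rpow_nonneg hδ.le _) (sInf_setOf_le_apply_nonneg hF _))
  set r := ε / 2
  have hr : 0 < r := half_pos hε
  have hscale : Tendsto (fun δ => r * δ ^ (-(1 / α))) (𝓝[>] 0) atTop :=
    (tendsto_rpow_neg_nhdsGT_zero (by simpa using hα)).const_mul_atTop hr
  filter_upwards [self_mem_nhdsWithin,
    hscale.eventually (htail.eventually (gt_mem_nhds (Real.rpow_pos_of_pos hr α)))]
    with δ (hδ : 0 < δ) hsmall
  -- at the scale `x = r δ^(-1/α)` the tail bound `x^α (L - F x) < r^α` says `L - F x < δ`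
  set x := r * δ ^ (-(1 / α))
  have hxα : x ^ α = r ^ α / δ := by
    rw [Real.mul_rpow hr.le (by positivity), ← Real.rpow_mul hδ.le, neg_mul,
      one_div_mul_cancel hα.ne', Real.rpow_neg_one, div_eq_mul_inv]
  have hlevel : L - δ ≤ F x := by
    rw [hxα, div_mul_eq_mul_div, div_lt_iff₀ hδ,
      mul_lt_mul_iff_right₀ (Real.rpow_pos_of_pos hr α)] at hsmall
    linarith
  calc δ ^ (1 / α) * sInf {x | L - δ ≤ F x}
      ≤ δ ^ (1 / α) * x := mul_le_mul_of_nonneg_left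
        (Real.sInf_le_of_mem_of_nonneg hlevel (by positivity)) (by positivity)
    _ = r := by rw [mul_left_comm, ← Real.rpow_add hδ, add_neg_cancel, Real.rpow_zero, mul_one]
    _ < ε := half_lt_self hε

end Quantile

lemma le_of_tendsto_of_le_comp_div {g : ℝ → ℝ} {c u l : ℝ} (hc : 1 < c)
    (hg : ∀ δ ∈ Ioo 0 u, g δ ≤ g (δ / c)) (hlim : Tendsto g (𝓝[>] 0) (𝓝 l))
    {δ : ℝ} (hδ : δ ∈ Ioo 0 u) : g δ ≤ l := by
  have hc0 : 0 < c := one_pos.trans hc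
  have hmem : ∀ n : ℕ, δ / c ^ n ∈ Ioo 0 u := fun n =>
    ⟨div_pos hδ.1 (pow_pos hc0 n), (div_le_self hδ.1.le (one_le_pow₀ hc.le)).trans_lt hδ.2⟩
  have hiter : ∀ n : ℕ, g δ ≤ g (δ / c ^ n) := by
    intro n
    induction n with
    | zero => simp
    | succ n ih => exact ih.trans ((hg _ (hmem n)).trans_eq (by rw [div_div, pow_succ]))
  have hto : Tendsto (fun n : ℕ => δ / c ^ n) atTop (𝓝[>] 0) :=
    tendsto_nhdsWithin_iff.2
      ⟨tendsto_const_nhds.div_atTop (tendsto_pow_atTop_atTop_of_one_lt hc),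
        Eventually.of_forall fun n => (hmem n).1⟩
  exact ge_of_tendsto (hlim.comp hto) (Eventually.of_forall hiter)

lemma liminf_div_comp_div_le_of_tendsto_rpow_mul {q : ℝ → ℝ} {β c : ℝ}
    (hq : ∀ δ, 0 ≤ q δ) (hc : 1 < c) (hlim : Tendsto (fun δ => δ ^ β * q δ) (𝓝[>] 0) (𝓝 0)) :
    liminf (fun δ => q (δ / c) / q δ) (𝓝[>] 0) ≤ c ^ β := by
  have hc0 : 0 < c := one_pos.trans hc
  refine liminf_le_of_frequently_le ?_
    (isBoundedUnder_of ⟨0, fun δ => div_nonneg (hq _) (hq _)⟩)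
  by_contra! hgt
  obtain ⟨u, hu, hsub⟩ := mem_nhdsGT_iff_exists_Ioo_subset.1 hgt
  have hstep : ∀ δ ∈ Ioo 0 u,
      0 < δ ^ β * q δ ∧ δ ^ β * q δ < (δ / c) ^ β * q (δ / c) := by
    intro δ hδ
    have hratio : c ^ β < q (δ / c) / q δ := hsub hδ
    have hqδ : 0 < q δ := (hq δ).lt_of_ne fun h0 => by
      rw [← h0, div_zero] at hratio
      exact (Real.rpow_pos_of_pos hc0 β).not_gt hratio
    refine ⟨mul_pos (Real.rpow_pos_of_pos hδ.1 β) hqδ, ?_⟩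
    calc δ ^ β * q δ = (δ / c) ^ β * (c ^ β * q δ) := by
          rw [Real.div_rpow hδ.1.le hc0.le, ← mul_assoc,
            div_mul_cancel₀ _ (Real.rpow_pos_of_pos hc0 β).ne']
      _ < (δ / c) ^ β * q (δ / c) :=
          mul_lt_mul_of_pos_left ((lt_div_iff₀ hqδ).1 hratio)
            (Real.rpow_pos_of_pos (div_pos hδ.1 hc0) β)
  have hmid : u / 2 ∈ Ioo 0 u := ⟨half_pos hu, half_lt_self hu⟩
  exact (hstep _ hmid).1.not_ge
    (le_of_tendsto_of_le_comp_div hc (fun δ hδ => (hstep δ hδ).2.le) hlim hmid)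

theorem liminf_quantile_ratio_le_general {Ω : Type*} [MeasurableSpace Ω]
    (μ : Measure Ω) (X : Ω → ENNReal)
    (α : ℝ) (hα : 0 < α)
    (htail : Tendsto
      (fun x : ℝ => x ^ α *
        (1 - (μ {ω | X ω = ⊤}).toReal - (μ {ω | X ω ≤ ENNReal.ofReal x}).toReal))
      atTop (nhds 0)) :
    ∀ c : ℝ, 1 < c →
      liminf
        (fun δ : ℝ =>
          sInf {x : ℝ | 1 - (μ {ω | X ω = ⊤}).toReal - δ / c ≤
              (μ {ω | X ω ≤ ENNReal.ofReal x}).toReal} /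
          sInf {x : ℝ | 1 - (μ {ω | X ω = ⊤}).toReal - δ ≤
              (μ {ω | X ω ≤ ENNReal.ofReal x}).toReal})
        (nhdsWithin 0 (Set.Ioi 0)) ≤ c ^ (1 / α) := by
  intro c hc
  have hF : ∀ x ≤ 0, (μ {ω | X ω ≤ ENNReal.ofReal x}).toReal =
      (μ {ω | X ω ≤ ENNReal.ofReal 0}).toReal := fun x hx => by
    rw [ENNReal.ofReal_of_nonpos hx, ENNReal.ofReal_zero]
  exact liminf_div_comp_div_le_of_tendsto_rpow_mul
    (q := fun δ => sInf {x | 1 - (μ {ω | X ω = ⊤}).toReal - δ ≤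
      (μ {ω | X ω ≤ ENNReal.ofReal x}).toReal})
    (fun δ => sInf_setOf_le_apply_nonneg hF _) hc (tendsto_rpow_mul_sInf_setOf_le hα hF htail)

/-- For a `[0,∞]`-valued random variable `X` with `p = P(X = ∞)`, if the upper tail of the
finite part decays faster than `x^{-α}` for some `α > 0`, i.e.
`x^α (1 - p - F_X(x)) → 0` as `x → ∞`, then for all `c > 1`,
`liminf_{δ ↓ 0} Q_X(1 - p - δ/c) / Q_X(1 - p - δ) ≤ c^{1/α}`. -/
theorem liminf_quantile_ratio_le {Ω : Type*} [MeasurableSpace Ω]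
    (μ : Measure Ω) [IsProbabilityMeasure μ] (X : Ω → ENNReal)
    (α : ℝ) (hα : 0 < α)
    (htail : Tendsto
      (fun x : ℝ => x ^ α *
        (1 - (μ {ω | X ω = ⊤}).toReal - (μ {ω | X ω ≤ ENNReal.ofReal x}).toReal))
      atTop (nhds 0)) :
    ∀ c : ℝ, 1 < c →
      liminf
        (fun δ : ℝ =>
          sInf {x : ℝ | 1 - (μ {ω | X ω = ⊤}).toReal - δ / c ≤
              (μ {ω | X ω ≤ ENNReal.ofReal x}).toReal} /
          sInf {x : ℝ | 1 - (μ {ω | X ω = ⊤}).toReal - δ ≤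
              (μ {ω | X ω ≤ ENNReal.ofReal x}).toReal})
        (nhdsWithin 0 (Set.Ioi 0)) ≤ c ^ (1 / α) :=
  liminf_quantile_ratio_le_general μ X α hα htail
end
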